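/- If a real sequence (a_i) satisfies a_0 ≤ c and a_{i+1} ≥ a_i + (c − a_i)/Δ for all i, where c ≥ 0 and Δ ≥ 1 is an integer, then c − a_Δ ≤ (1 − 1/Δ)^Δ · (c − a_0), and consequently a_Δ ≥ (1 − 1/e)·c when a_0 = 0. -/
import Mathlib

theorem stmt_8 (a : ℕ → ℝ) (c : ℝ) (hc : 0 ≤ c) (Δ : ℕ) (hΔ : 1 ≤ Δ)
    (h0 : a 0 ≤ c)
    (hstep : ∀ i : ℕ, a i + (c - a i) / (Δ : ℝ) ≤ a (i + 1)) :
    c - a Δ ≤ (1 - 1 / (Δ : ℝ)) ^ Δ * (c - a 0) ∧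
      (a 0 = 0 → (1 - 1 / Real.exp 1) * c ≤ a Δ) := by
  have hΔpos : (0 : ℝ) < (Δ : ℝ) := by exact_mod_cast Nat.pos_of_ne_zero (by omega)
  have hΔne : (Δ : ℝ) ≠ 0 := ne_of_gt hΔpos
  have hq0 : (0 : ℝ) ≤ 1 - 1 / (Δ : ℝ) := by
    have : 1 / (Δ : ℝ) ≤ 1 := by
      rw [div_le_one hΔpos]; exact_mod_cast hΔ
    linarith
  have key : ∀ i : ℕ, c - a i ≤ (1 - 1 / (Δ : ℝ)) ^ i * (c - a 0) := by
    intro i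
    induction i with
    | zero => simp
    | succ n ih =>
      have h := hstep n
      have : c - a (n + 1) ≤ (1 - 1 / (Δ : ℝ)) * (c - a n) := by
        have : c - a (n + 1) ≤ c - (a n + (c - a n) / Δ) := by linarith
        calc c - a (n + 1) ≤ c - a n - (c - a n) / Δ := by linarith
          _ = (1 - 1 / (Δ : ℝ)) * (c - a n) := by field_simp
      calc c - a (n + 1) ≤ (1 - 1 / (Δ : ℝ)) * (c - a n) := this
        _ ≤ (1 - 1 / (Δ : ℝ)) * ((1 - 1 / (Δ : ℝ)) ^ n * (c - a 0)) := by
            exact mul_le_mul_of_nonneg_left ih hq0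
        _ = (1 - 1 / (Δ : ℝ)) ^ (n + 1) * (c - a 0) := by ring
  refine ⟨key Δ, fun ha0 => ?_⟩
  have hpow : (1 - 1 / (Δ : ℝ)) ^ Δ ≤ 1 / Real.exp 1 := by
    have h1 : 1 - 1 / (Δ : ℝ) ≤ Real.exp (-(1 / (Δ : ℝ))) := by
      have := Real.add_one_le_exp (-(1 / (Δ : ℝ)))
      linarith
    calc (1 - 1 / (Δ : ℝ)) ^ Δ ≤ Real.exp (-(1 / (Δ : ℝ))) ^ Δ :=
          pow_le_pow_left₀ hq0 h1 Δ
      _ = Real.exp ((Δ : ℝ) * (-(1 / (Δ : ℝ)))) := (Real.exp_nat_mul _ _).symm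
      _ = Real.exp (-1) := by rw [mul_neg, mul_one_div, div_self hΔne]
      _ = 1 / Real.exp 1 := by rw [Real.exp_neg]; ring
  have h1 := key Δ
  rw [ha0, sub_zero] at h1
  have h2 : (1 - 1 / (Δ : ℝ)) ^ Δ * c ≤ (1 / Real.exp 1) * c :=
    mul_le_mul_of_nonneg_right hpow hc
  have : (1 - 1 / Real.exp 1) * c = c - (1 / Real.exp 1) * c := by ring
  linarith
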